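/- arXiv:2410.14125 — 3 statements merged into one kernel-verified Lean document; each statement's English description precedes it below -/
import Mathlib

section
/- Let the midpoint-upwind coefficients on Ω⁻ be r_i^- = ε/(h_i ħ_i) - ā_i/h_i - (b̄_i/2 + 1/Δt), r_i^+ = ε/(h_{i+1} ħ_i), r_i^c = -r_i^- - r_i^+ - (1/2)(b̄_i + 2/Δt), with ε > 0, h_i, h_{i+1} > 0, ħ_i = (h_i+h_{i+1})/2, Δt > 0, b̄_i ≥ 0, and ā_i ≤ -α₁ < 0. If 2 ā_i ≤ -(b̄_i + 2/Δt) h_i, then r_i^- > 0, r_i^+ > 0, and r_i^c < -(1/2)(b̄_i + 2/Δt) < 0. -/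
/-- Sign pattern for the midpoint-upwind coefficients on Ω⁻:
if ā ≤ -α₁ < 0 and 2ā ≤ -(b̄ + 2/Δt)h₁ then r⁻ > 0, r⁺ > 0 and
r^c < -(1/2)(b̄ + 2/Δt) < 0. -/
theorem stmt_6 (ε h₁ h₂ abar bbar Δt α₁ hbar rm rp rc : ℝ)
    (hε : 0 < ε) (hh₁ : 0 < h₁) (hh₂ : 0 < h₂) (hbbar : 0 ≤ bbar) (hΔt : 0 < Δt)
    (hα₁ : 0 < α₁) (ha : abar ≤ -α₁)
    (hbar_def : hbar = (h₁ + h₂) / 2)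
    (hrm : rm = ε / (h₁ * hbar) - abar / h₁ - (bbar / 2 + 1 / Δt))
    (hrp : rp = ε / (h₂ * hbar))
    (hrc : rc = -rm - rp - (1 / 2) * (bbar + 2 / Δt))
    (hmesh : 2 * abar ≤ -(bbar + 2 / Δt) * h₁) :
    0 < rm ∧ 0 < rp ∧ rc < -(1 / 2) * (bbar + 2 / Δt) ∧
      -(1 / 2) * (bbar + 2 / Δt) < 0 := by
  have hbarpos : 0 < hbar := by rw [hbar_def]; linarith
  have hΔt' : 0 < 1 / Δt := by positivity
  have h1 : 0 < ε / (h₁ * hbar) := by positivity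
  have h2 : 0 < ε / (h₂ * hbar) := by positivity
  have key : abar / h₁ ≤ -(bbar / 2 + 1 / Δt) := by
    rw [div_le_iff₀ hh₁]
    ring_nf
    ring_nf at hmesh
    linarith
  have hrm' : 0 < rm := by rw [hrm]; linarith
  have hrp' : 0 < rp := by rw [hrp]; exact h2
  have h3 : 0 < 2 / Δt := by positivity
  refine ⟨hrm', hrp', ?_, by linarith⟩
  rw [hrc]; nlinarith
end

section
/- Discrete stability: Under the hypotheses of the discrete comparison principle (r_i^- ≥ 0, r_i^+ ≥ 0, r_i^- + r_i^c + r_i^+ ≤ -β < 0), any mesh function Y with (L Y)_i = g_i for interior i satisfies max_i |Y_i| ≤ max{|Y_0|, |Y_N|, (max_i |g_i|)/β}. -/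
/-- Discrete stability: under the comparison-principle hypotheses, any mesh
function Y with (L Y)_i = g_i satisfies |Y_i| ≤ max{|Y₀|, |Y_N|, max|g|/β}. -/
theorem stmt_8 (N : ℕ) (hN : 0 < N) (rm rc rp Y g : ℕ → ℝ) (β G : ℝ) (hβ : 0 < β)
    (hsign : ∀ i, 1 ≤ i → i ≤ N - 1 →
      0 ≤ rm i ∧ 0 ≤ rp i ∧ rm i + rc i + rp i ≤ -β)
    (hL : ∀ i, 1 ≤ i → i ≤ N - 1 →
      rm i * Y (i - 1) + rc i * Y i + rp i * Y (i + 1) = g i)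
    (hG : ∀ i, 1 ≤ i → i ≤ N - 1 → |g i| ≤ G) :
    ∀ i, i ≤ N → |Y i| ≤ max (max |Y 0| |Y N|) (G / β) := by
  -- pick an index j maximizing |Y| on {0,...,N}
  obtain ⟨j, hjmem, hjmax⟩ := Finset.exists_max_image (Finset.range (N + 1))
    (fun i => |Y i|) ⟨0, Finset.mem_range.2 (Nat.succ_pos N)⟩
  have hjN : j ≤ N := Nat.lt_succ_iff.1 (Finset.mem_range.1 hjmem)
  intro i hi
  have hiY : |Y i| ≤ |Y j| := hjmax i (Finset.mem_range.2 (Nat.lt_succ_of_le hi))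
  refine hiY.trans ?_
  by_cases h0 : j = 0
  · subst h0; exact le_max_of_le_left (le_max_left _ _)
  by_cases hNj : j = N
  · subst hNj; exact le_max_of_le_left (le_max_right _ _)
  -- interior case
  have h1 : 1 ≤ j := Nat.one_le_iff_ne_zero.2 h0
  have h2 : j ≤ N - 1 := Nat.le_sub_one_of_lt (lt_of_le_of_ne hjN hNj)
  obtain ⟨hm, hp, hc⟩ := hsign j h1 h2
  have heq := hL j h1 h2
  have hgj := hG j h1 h2
  have hYm : |Y (j - 1)| ≤ |Y j| :=
    hjmax _ (Finset.mem_range.2 (Nat.lt_succ_of_le ((Nat.sub_le j 1).trans hjN)))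
  have hYp : |Y (j + 1)| ≤ |Y j| := by
    refine hjmax _ (Finset.mem_range.2 ?_)
    have : j < N := lt_of_le_of_ne hjN hNj
    omega
  have hrc : rc j ≤ -β - rm j - rp j := by linarith
  have hrcneg : rc j < 0 := by linarith
  have key : β * |Y j| ≤ G := by
    have h1' : |rc j * Y j| = |g j - rm j * Y (j - 1) - rp j * Y (j + 1)| := by
      rw [show rc j * Y j = g j - rm j * Y (j - 1) - rp j * Y (j + 1) by linarith]
    have h2' : |g j - rm j * Y (j - 1) - rp j * Y (j + 1)| ≤
        G + rm j * |Y j| + rp j * |Y j| := by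
      calc |g j - rm j * Y (j - 1) - rp j * Y (j + 1)|
          ≤ |g j| + |rm j * Y (j - 1)| + |rp j * Y (j + 1)| := by
            apply (abs_sub _ _).trans
            gcongr
            exact abs_sub _ _
        _ ≤ G + rm j * |Y j| + rp j * |Y j| := by
            rw [abs_mul, abs_mul, abs_of_nonneg hm, abs_of_nonneg hp]
            gcongr
    have h3' : |rc j * Y j| = -rc j * |Y j| := by
      rw [abs_mul, abs_of_neg hrcneg]
    have h4' : (β + rm j + rp j) * |Y j| ≤ -rc j * |Y j| := by
      apply mul_le_mul_of_nonneg_right _ (abs_nonneg _)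
      linarith
    nlinarith [h1', h2', h3', h4']
  have : |Y j| ≤ G / β := by
    rw [le_div_iff₀ hβ]; linarith [key]
  exact le_max_of_le_right this
end

section
/- Stability of the continuous problem: if L y := ε y'' + a y' - b y = f on (0,d)∪(d,1), with a(x) ≤ -α₁ < 0 on (0,d), a(x) ≥ α₂ > 0 on (d,1), b ≥ 0, y ∈ C⁰[0,1] ∩ C²((0,d)∪(d,1)), [y'](d) = 0, then ‖y‖_∞ ≤ max(|y(0)|, |y(1)|) + ‖f‖_∞/θ where θ = min(α₁/d, α₂/(1-d)). -/
/-!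
Comparison with the barrier `M + c ψ`, where `M = max |y 0| |y 1|`, `ψ` is the tent function
with peak `1` at `d`, and `θ c > F`. Suppose `y - c ψ` had a maximum exceeding `M` on `[0, 1]`.
It is not attained at `0` or `1`; nor at `d`, where `ψ` has a concave corner and `y` does not;
and at an interior point `t ≠ d` we would have `y' = c ψ'`, `y'' ≤ 0` and `y > 0`, whence
`L y ≤ a c ψ' ≤ -θ c < -F`. So `±y ≤ M + c` for every `c > F / θ`.
-/

open Set Filter Topology

theorem IsLocalMax.deriv_deriv_nonpos {f : ℝ → ℝ} {x : ℝ} (h : IsLocalMax f x)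
    (hc : ContinuousAt f x) : deriv (deriv f) x ≤ 0 := by
  by_contra! hpos
  have hmin : IsLocalMin f x := isLocalMin_of_deriv_deriv_pos hpos h.deriv_eq_zero hc
  -- being both a local max and a local min, `f` is locally constant at `x`
  have hconst : f =ᶠ[𝓝 x] fun _ => f x := (h.and hmin).mono fun u hu => le_antisymm hu.1 hu.2
  have : deriv (deriv f) x = 0 := by
    rw [hconst.deriv.deriv_eq]
    simp
  exact hpos.ne' this

theorem IsLocalMax.deriv_eq_and_deriv_deriv_nonpos_of_sub_affine {y : ℝ → ℝ} {t m k : ℝ}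
    (h : IsLocalMax (fun u => y u - (m * u + k)) t)
    (hy : ∀ᶠ u in 𝓝 t, DifferentiableAt ℝ y u) :
    deriv y t = m ∧ deriv (deriv y) t ≤ 0 := by
  have hderiv : deriv (fun u => y u - (m * u + k)) =ᶠ[𝓝 t] fun u => deriv y u - m :=
    hy.mono fun u hu => by
      simpa using (hu.hasDerivAt.fun_sub (((hasDerivAt_id u).const_mul m).add_const k)).deriv
  constructor
  · have := h.deriv_eq_zero
    rw [hderiv.eq_of_nhds] at this
    linarith
  · have := h.deriv_deriv_nonpos
      (hy.self_of_nhds.continuousAt.sub (by fun_prop))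
    rwa [hderiv.deriv_eq, deriv_sub_const] at this

theorem not_isLocalMax_of_hasDerivWithinAt_Iic_Ici {f : ℝ → ℝ} {a fl fr : ℝ}
    (hl : HasDerivWithinAt f fl (Iic a) a) (hr : HasDerivWithinAt f fr (Ici a) a)
    (hlt : fl < fr) : ¬IsLocalMax f a := by
  intro h
  have hl_nonneg : 0 ≤ fl := by
    have := (h.on (Iic a)).hasFDerivWithinAt_nonpos hl.hasFDerivWithinAt
      (mem_posTangentConeAt_of_segment_subset (y := -1) (by
        rw [segment_symm, segment_eq_Icc (by linarith)]; exact Icc_subset_Iic_self))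
    simpa using this
  have hr_nonpos : fr ≤ 0 := by
    have := (h.on (Ici a)).hasFDerivWithinAt_nonpos hr.hasFDerivWithinAt
      (mem_posTangentConeAt_of_segment_subset (y := 1) (by
        rw [segment_eq_Icc (by linarith)]; exact Icc_subset_Ici_self))
    simpa using this
  linarith

theorem ContinuousOn.le_of_isLocalMax_le {v : ℝ → ℝ} {p q M : ℝ}
    (hv : ContinuousOn v (Icc p q)) (hp : v p ≤ M) (hq : v q ≤ M)
    (hloc : ∀ x ∈ Ioo p q, IsLocalMax v x → v x ≤ M) : ∀ x ∈ Icc p q, v x ≤ M := by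
  intro x hx
  obtain ⟨x₀, hx₀, hmax⟩ := isCompact_Icc.exists_isMaxOn ⟨x, hx⟩ hv
  refine (hmax hx).trans ?_
  rcases eq_or_lt_of_le hx₀.1 with rfl | hpx₀
  · exact hp
  rcases eq_or_lt_of_le hx₀.2 with rfl | hx₀q
  · exact hq
  exact hloc x₀ ⟨hpx₀, hx₀q⟩ (hmax.isLocalMax (Icc_mem_nhds hpx₀ hx₀q))

/-- The barrier `ψ` of the paper. -/
noncomputable def tent (d x : ℝ) : ℝ := if x ≤ d then x / d else (1 - x) / (1 - d)

section tent

variable {d : ℝ}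

theorem tent_zero (hd0 : 0 < d) : tent d 0 = 0 := by simp [tent, hd0.le]

theorem tent_one (hd1 : d < 1) : tent d 1 = 0 := by simp [tent, hd1.not_ge]

theorem tent_nonneg (hd0 : 0 < d) (hd1 : d < 1) {x : ℝ} (hx : x ∈ Icc 0 1) : 0 ≤ tent d x := by
  unfold tent
  split_ifs
  · exact div_nonneg hx.1 hd0.le
  · exact div_nonneg (by linarith [hx.2]) (by linarith)

theorem tent_le_one (hd0 : 0 < d) (hd1 : d < 1) (x : ℝ) : tent d x ≤ 1 := by
  unfold tent
  split_ifs with h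
  · exact div_le_one_of_le₀ h hd0.le
  · exact div_le_one_of_le₀ (by linarith) (by linarith)

theorem continuous_tent (hd0 : 0 < d) (hd1 : d < 1) : Continuous (tent d) := by
  refine Continuous.if_le (by fun_prop) (by fun_prop) continuous_id continuous_const ?_
  rintro x rfl
  rw [div_self hd0.ne', div_self (sub_pos.2 hd1).ne']

theorem tent_eventuallyEq_of_lt {x : ℝ} (hx : x < d) : tent d =ᶠ[𝓝 x] fun u => u / d := by
  filter_upwards [Iio_mem_nhds hx] with u hu using if_pos (le_of_lt hu)

theorem tent_eventuallyEq_of_gt {x : ℝ} (hx : d < x) :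
    tent d =ᶠ[𝓝 x] fun u => (1 - u) / (1 - d) := by
  filter_upwards [Ioi_mem_nhds hx] with u hu using if_neg (not_le.2 hu)

theorem hasDerivWithinAt_tent_Iic : HasDerivWithinAt (tent d) (1 / d) (Iic d) d :=
  ((hasDerivAt_id d).div_const d).hasDerivWithinAt.congr (fun _ hu => if_pos hu) (if_pos le_rfl)

theorem hasDerivWithinAt_tent_Ici (hd0 : 0 < d) (hd1 : d < 1) :
    HasDerivWithinAt (tent d) (-1 / (1 - d)) (Ici d) d := by
  have hline : ∀ u ∈ Ici d, tent d u = (1 - u) / (1 - d) := by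
    intro u hu
    rcases eq_or_lt_of_le (mem_Ici.1 hu) with rfl | h
    · rw [tent, if_pos le_rfl, div_self hd0.ne', div_self (sub_pos.2 hd1).ne']
    · exact if_neg (not_le.2 h)
  simpa using (((hasDerivAt_id d).const_sub 1).div_const (1 - d)).hasDerivWithinAt.congr
    hline (hline d self_mem_Ici)

end tent

/-- The paper's operator `L`. -/
noncomputable def convDiffOp (ε : ℝ) (a b y : ℝ → ℝ) (x : ℝ) : ℝ :=
  ε * deriv (deriv y) x + a x * deriv y x - b x * y x

theorem convDiffOp_neg (ε : ℝ) (a b y : ℝ → ℝ) (x : ℝ) :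
    convDiffOp ε a b (-y) x = -convDiffOp ε a b y x := by
  simp only [convDiffOp, deriv.neg', deriv.fun_neg, Pi.neg_apply]
  ring

theorem not_isLocalMax_sub_affine_of_le_convDiffOp {ε m k F t : ℝ} {a b y : ℝ → ℝ}
    (hy : ∀ᶠ u in 𝓝 t, DifferentiableAt ℝ y u) (hε : 0 ≤ ε) (hb : 0 ≤ b t) (hyt : 0 ≤ y t)
    (hslope : a t * m < -F) (hL : -F ≤ convDiffOp ε a b y t) :
    ¬IsLocalMax (fun u => y u - (m * u + k)) t := by
  intro h
  obtain ⟨hy', hy''⟩ := h.deriv_eq_and_deriv_deriv_nonpos_of_sub_affine hy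
  rw [convDiffOp, hy'] at hL
  nlinarith [mul_nonpos_of_nonneg_of_nonpos hε hy'', mul_nonneg hb hyt]

theorem le_add_of_le_convDiffOp {y a b : ℝ → ℝ} {ε d α₁ α₂ F M c yl yr : ℝ}
    (hε : 0 ≤ ε) (hd0 : 0 < d) (hd1 : d < 1) (hc : 0 < c)
    (hFc₁ : F < α₁ / d * c) (hFc₂ : F < α₂ / (1 - d) * c)
    (hM : 0 ≤ M) (hy0 : y 0 ≤ M) (hy1 : y 1 ≤ M)
    (hy_cont : ContinuousOn y (Icc 0 1))
    (hy_diff : ∀ x ∈ Ioo 0 d ∪ Ioo d 1, DifferentiableAt ℝ y x)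
    (haL : ∀ x ∈ Ioo 0 d, a x ≤ -α₁) (haR : ∀ x ∈ Ioo d 1, α₂ ≤ a x)
    (hb : ∀ x ∈ Ioo 0 d ∪ Ioo d 1, 0 ≤ b x)
    (hL : ∀ x ∈ Ioo 0 d ∪ Ioo d 1, -F ≤ convDiffOp ε a b y x)
    (hl : HasDerivWithinAt y yl (Iic d) d) (hr : HasDerivWithinAt y yr (Ici d) d)
    (hjump : yl ≤ yr) :
    ∀ x ∈ Icc 0 1, y x ≤ M + c := by
  have h1d : 0 < 1 - d := sub_pos.2 hd1
  have hbarrier : ∀ x ∈ Icc 0 1, y x - c * tent d x ≤ M := by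
    refine ContinuousOn.le_of_isLocalMax_le (v := fun x => y x - c * tent d x)
      (hy_cont.sub (continuousOn_const.mul (continuous_tent hd0 hd1).continuousOn))
      (by simpa [tent_zero hd0] using hy0) (by simpa [tent_one hd1] using hy1) ?_
    intro t ht hmax
    by_contra! hMt
    have hyt : 0 ≤ y t := by
      nlinarith [tent_nonneg hd0 hd1 (Ioo_subset_Icc_self ht)]
    rcases lt_trichotomy t d with htd | rfl | htd
    · have hU : Ioo 0 d ∈ 𝓝 t := Ioo_mem_nhds ht.1 htd
      refine not_isLocalMax_sub_affine_of_le_convDiffOp (m := c / d) (k := 0)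
        (eventually_of_mem hU fun u hu => hy_diff u (Or.inl hu)) hε
        (hb t (Or.inl ⟨ht.1, htd⟩)) hyt ?_ (hL t (Or.inl ⟨ht.1, htd⟩)) (hmax.congr ?_)
      · have := mul_le_mul_of_nonneg_right (haL t ⟨ht.1, htd⟩) (div_pos hc hd0).le
        have : α₁ / d * c = α₁ * (c / d) := by ring
        linarith
      · filter_upwards [tent_eventuallyEq_of_lt htd] with u hu
        simp only [hu]
        ring
    · refine not_isLocalMax_of_hasDerivWithinAt_Iic_Ici
        (hl.fun_sub (hasDerivWithinAt_tent_Iic.const_mul c))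
        (hr.fun_sub ((hasDerivWithinAt_tent_Ici hd0 hd1).const_mul c)) ?_ hmax
      have : c * (-1 / (1 - t)) = -(c / (1 - t)) := by ring
      linarith [div_pos hc hd0, div_pos hc h1d, mul_one_div c t]
    · have hU : Ioo d 1 ∈ 𝓝 t := Ioo_mem_nhds htd ht.2
      refine not_isLocalMax_sub_affine_of_le_convDiffOp (m := -c / (1 - d)) (k := c / (1 - d))
        (eventually_of_mem hU fun u hu => hy_diff u (Or.inr hu)) hε
        (hb t (Or.inr ⟨htd, ht.2⟩)) hyt ?_ (hL t (Or.inr ⟨htd, ht.2⟩)) (hmax.congr ?_)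
      · have := mul_le_mul_of_nonneg_right (haR t ⟨htd, ht.2⟩) (div_pos hc h1d).le
        have : a t * (-c / (1 - d)) = -(a t * (c / (1 - d))) := by ring
        have : α₂ / (1 - d) * c = α₂ * (c / (1 - d)) := by ring
        linarith
      · filter_upwards [tent_eventuallyEq_of_gt htd] with u hu
        simp only [hu]
        ring
  intro x hx
  linarith [hbarrier x hx, mul_le_of_le_one_right hc.le (tent_le_one hd0 hd1 x)]

/-- Stability of the continuous problem: if ε y'' + a y' - b y = f on
(0,d)∪(d,1) with a ≤ -α₁ on (0,d), a ≥ α₂ on (d,1), b ≥ 0, [y'](d) = 0,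
then |y| ≤ max(|y 0|, |y 1|) + ‖f‖/θ with θ = min(α₁/d, α₂/(1-d)). -/
theorem stmt_17 (y a b f : ℝ → ℝ) (ε d α₁ α₂ F yd : ℝ)
    (hε : 0 < ε) (hd0 : 0 < d) (hd1 : d < 1)
    (hα₁ : 0 < α₁) (hα₂ : 0 < α₂)
    (hy_cont : ContinuousOn y (Set.Icc 0 1))
    (hy_diff : ∀ x ∈ Set.Ioo 0 d ∪ Set.Ioo d 1,
      DifferentiableAt ℝ y x ∧ DifferentiableAt ℝ (deriv y) x)
    (haL : ∀ x ∈ Set.Ioo 0 d, a x ≤ -α₁)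
    (haR : ∀ x ∈ Set.Ioo d 1, α₂ ≤ a x)
    (hb : ∀ x ∈ Set.Ioo 0 d ∪ Set.Ioo d 1, 0 ≤ b x)
    (heq : ∀ x ∈ Set.Ioo 0 d ∪ Set.Ioo d 1,
      ε * deriv (deriv y) x + a x * deriv y x - b x * y x = f x)
    (hF : ∀ x ∈ Set.Ioo 0 d ∪ Set.Ioo d 1, |f x| ≤ F)
    (hLder : HasDerivWithinAt y yd (Set.Iic d) d)
    (hRder : HasDerivWithinAt y yd (Set.Ici d) d) :
    ∀ x ∈ Set.Icc (0 : ℝ) 1,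
      |y x| ≤ max |y 0| |y 1| + F / min (α₁ / d) (α₂ / (1 - d)) := by
  intro x hx
  set θ := min (α₁ / d) (α₂ / (1 - d))
  have hθ : 0 < θ := lt_min (div_pos hα₁ hd0) (div_pos hα₂ (sub_pos.2 hd1))
  have hF0 : 0 ≤ F := (abs_nonneg _).trans (hF (d / 2) (Or.inl ⟨half_pos hd0, half_lt_self hd0⟩))
  have hM : 0 ≤ max |y 0| |y 1| := (abs_nonneg _).trans (le_max_left _ _)
  refine le_of_forall_pos_le_add fun e he => ?_
  set c := F / θ + e
  have hθc : F < θ * c := by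
    rw [mul_add, mul_div_cancel₀ _ hθ.ne']
    linarith [mul_pos hθ he]
  have hc : 0 < c := by positivity
  have hFc₁ : F < α₁ / d * c := hθc.trans_le (by gcongr; exact min_le_left _ _)
  have hFc₂ : F < α₂ / (1 - d) * c := hθc.trans_le (by gcongr; exact min_le_right _ _)
  have hupper := le_add_of_le_convDiffOp hε.le hd0 hd1 hc hFc₁ hFc₂ hM
    ((le_abs_self _).trans (le_max_left _ _)) ((le_abs_self _).trans (le_max_right _ _))
    hy_cont (fun x hx => (hy_diff x hx).1) haL haR hb
    (fun x hx => by rw [convDiffOp, heq x hx]; exact (abs_le.1 (hF x hx)).1)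
    hLder hRder le_rfl x hx
  have hlower := le_add_of_le_convDiffOp (y := -y) hε.le hd0 hd1 hc hFc₁ hFc₂ hM
    ((neg_le_abs _).trans (le_max_left _ _)) ((neg_le_abs _).trans (le_max_right _ _))
    hy_cont.neg (fun x hx => (hy_diff x hx).1.neg) haL haR hb
    (fun x hx => by rw [convDiffOp_neg, convDiffOp, heq x hx]; exact neg_le_neg (abs_le.1 (hF x hx)).2)
    hLder.neg hRder.neg le_rfl x hx
  rw [add_assoc]
  exact abs_le.2 ⟨by linarith [show (-y) x = -y x from rfl], hupper⟩
end
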